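/- arXiv:2305.06714 — 3 statements merged into one kernel-verified Lean document; each statement's English description precedes it below -/
import Mathlib

section
/- Let X be a double category in which every top-right corner fills into a square, every square is bicartesian, and X is invariant (horizontally and vertically). Then every isomorphism of Cnr(X) lies in E_X ∩ M_X. In particular, if [u,g] is a corner with g an isomorphism then [u,g] ∈ E_X, and if u is an isomorphism then [u,g] ∈ M_X. -/
open CategoryTheory

universe u

namespace Paper

/-- A (strict) double category, presented elementarily: objects, vertical morphisms,
horizontal morphisms and squares, with vertical and horizontal compositions of squares. -/
structure DblCat : Type (u + 1) where
  Obj : Type u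
  Ver : Obj → Obj → Type u
  Hor : Obj → Obj → Type u
  vId : ∀ a, Ver a a
  vComp : ∀ {a b c}, Ver a b → Ver b c → Ver a c
  hId : ∀ a, Hor a a
  hComp : ∀ {a b c}, Hor a b → Hor b c → Hor a c
  vId_comp : ∀ {a b} (f : Ver a b), vComp (vId a) f = f
  vComp_id : ∀ {a b} (f : Ver a b), vComp f (vId b) = f
  vAssoc : ∀ {a b c d} (f : Ver a b) (g : Ver b c) (h : Ver c d),
    vComp (vComp f g) h = vComp f (vComp g h)
  hId_comp : ∀ {a b} (f : Hor a b), hComp (hId a) f = f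
  hComp_id : ∀ {a b} (f : Hor a b), hComp f (hId b) = f
  hAssoc : ∀ {a b c d} (f : Hor a b) (g : Hor b c) (h : Hor c d),
    hComp (hComp f g) h = hComp f (hComp g h)
  /-- squares, indexed by top, left, right, bottom boundary -/
  Sq : ∀ {a b c d}, Hor a b → Ver a c → Ver b d → Hor c d → Type u
  vSq : ∀ {a b c d e f : Obj} {t : Hor a b} {l : Ver a c} {r : Ver b d} {m : Hor c d}
    {l' : Ver c e} {r' : Ver d f} {bo : Hor e f},
    Sq t l r m → Sq m l' r' bo → Sq t (vComp l l') (vComp r r') bo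
  hSq : ∀ {a b c a' b' c' : Obj} {t1 : Hor a b} {t2 : Hor b c} {l : Ver a a'} {m : Ver b b'}
    {r : Ver c c'} {b1 : Hor a' b'} {b2 : Hor b' c'},
    Sq t1 l m b1 → Sq t2 m r b2 → Sq (hComp t1 t2) l r (hComp b1 b2)
  vIdSq : ∀ {a b} (g : Hor a b), Sq g (vId a) (vId b) g
  hIdSq : ∀ {a b} (u : Ver a b), Sq (hId a) u u (hId b)
  vSq_id_comp : ∀ {a b c d} {t : Hor a b} {l : Ver a c} {r : Ver b d} {bo : Hor c d}
    (α : Sq t l r bo), HEq (vSq (vIdSq t) α) α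
  vSq_comp_id : ∀ {a b c d} {t : Hor a b} {l : Ver a c} {r : Ver b d} {bo : Hor c d}
    (α : Sq t l r bo), HEq (vSq α (vIdSq bo)) α
  vSq_assoc : ∀ {a b c d e f g h : Obj} {t : Hor a b} {l : Ver a c} {r : Ver b d}
    {m1 : Hor c d} {l' : Ver c e} {r' : Ver d f} {m2 : Hor e f}
    {l'' : Ver e g} {r'' : Ver f h} {bo : Hor g h}
    (α : Sq t l r m1) (β : Sq m1 l' r' m2) (γ : Sq m2 l'' r'' bo),
    HEq (vSq (vSq α β) γ) (vSq α (vSq β γ))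
  hSq_id_comp : ∀ {a b c d} {t : Hor a b} {l : Ver a c} {r : Ver b d} {bo : Hor c d}
    (α : Sq t l r bo), HEq (hSq (hIdSq l) α) α
  hSq_comp_id : ∀ {a b c d} {t : Hor a b} {l : Ver a c} {r : Ver b d} {bo : Hor c d}
    (α : Sq t l r bo), HEq (hSq α (hIdSq r)) α
  hSq_assoc : ∀ {a b c d a' b' c' d' : Obj} {t1 : Hor a b} {t2 : Hor b c} {t3 : Hor c d}
    {l : Ver a a'} {m1 : Ver b b'} {m2 : Ver c c'} {r : Ver d d'}
    {b1 : Hor a' b'} {b2 : Hor b' c'} {b3 : Hor c' d'}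
    (α : Sq t1 l m1 b1) (β : Sq t2 m1 m2 b2) (γ : Sq t3 m2 r b3),
    HEq (hSq (hSq α β) γ) (hSq α (hSq β γ))
  interchange : ∀ {a b c a' b' c' a'' b'' c'' : Obj}
    {t1 : Hor a b} {t2 : Hor b c} {l : Ver a a'} {m : Ver b b'} {r : Ver c c'}
    {b1 : Hor a' b'} {b2 : Hor b' c'}
    {l' : Ver a' a''} {m' : Ver b' b''} {r' : Ver c' c''}
    {c1 : Hor a'' b''} {c2 : Hor b'' c''}
    (α : Sq t1 l m b1) (γ : Sq t2 m r b2) (β : Sq b1 l' m' c1) (δ : Sq b2 m' r' c2),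
    hSq (vSq α β) (vSq γ δ) = vSq (hSq α γ) (hSq β δ)
  vIdSq_hId : ∀ a, vIdSq (hId a) = hIdSq (vId a)
  vIdSq_hComp : ∀ {a b c} (g : Hor a b) (h : Hor b c),
    vIdSq (hComp g h) = hSq (vIdSq g) (vIdSq h)
  hIdSq_vComp : ∀ {a b c} (u : Ver a b) (v : Ver b c),
    hIdSq (vComp u v) = vSq (hIdSq u) (hIdSq v)

namespace DblCat

variable (X : DblCat.{u})

/-- A square `κ` (with top `g`, left `l`, right `u`, bottom `bo`) is opcartesian
(with respect to the codomain functor `d₀ : X₁ → X₀`). -/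
def Opcart {a b bh c : X.Obj} {g : X.Hor a b} {l : X.Ver a bh} {u : X.Ver b c}
    {bo : X.Hor bh c} (κ : X.Sq g l u bo) : Prop :=
  ∀ {d e : X.Obj} (w : X.Ver a d) (v : X.Ver c e) (h : X.Hor d e)
    (α : X.Sq g w (X.vComp u v) h),
    ∃! p : Σ' θ : X.Ver bh d, X.Sq bo θ v h,
      X.vComp l p.1 = w ∧ HEq (X.vSq κ p.2) α

/-- A crossed double category: every top-right corner has an opcartesian filler,
horizontal identity squares are opcartesian, and opcartesian squares are closed under
horizontal composition. -/
def Crossed : Prop :=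
  (∀ {a b c : X.Obj} (g : X.Hor a b) (u : X.Ver b c),
      ∃ (bh : X.Obj) (l : X.Ver a bh) (bo : X.Hor bh c) (κ : X.Sq g l u bo), X.Opcart κ) ∧
  (∀ {a b : X.Obj} (u : X.Ver a b), X.Opcart (X.hIdSq u)) ∧
  (∀ {a b c a' b' c' : X.Obj} {t1 : X.Hor a b} {t2 : X.Hor b c} {l : X.Ver a a'}
      {m : X.Ver b b'} {r : X.Ver c c'} {b1 : X.Hor a' b'} {b2 : X.Hor b' c'}
      (κ1 : X.Sq t1 l m b1) (κ2 : X.Sq t2 m r b2),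
      X.Opcart κ1 → X.Opcart κ2 → X.Opcart (X.hSq κ1 κ2))

/-- Opcartesian in `X* = ((Xᵛ)ʰ)ᵀ`, expressed elementarily in `X`. -/
def Opcart2 {a b bh c : X.Obj} {g : X.Hor a b} {l : X.Ver a bh} {u : X.Ver b c}
    {bo : X.Hor bh c} (κ : X.Sq g l u bo) : Prop :=
  ∀ {e : X.Obj} (w : X.Ver a e) (k : X.Hor e c) (α : X.Sq g w u k),
    ∃! p : Σ' ψ : X.Hor e bh, X.Sq (X.hId a) w l ψ,
      HEq (X.hSq p.2 κ) α

/-- Bicartesian squares: opcartesian in both `X` and `X*`. -/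
def Bicart {a b bh c : X.Obj} {g : X.Hor a b} {l : X.Ver a bh} {u : X.Ver b c}
    {bo : X.Hor bh c} (κ : X.Sq g l u bo) : Prop :=
  X.Opcart κ ∧ X.Opcart2 κ

/-- Top-right bicrossed double category. -/
def TopRightBicrossed : Prop :=
  (∀ {a b c : X.Obj} (g : X.Hor a b) (u : X.Ver b c),
      ∃ (bh : X.Obj) (l : X.Ver a bh) (bo : X.Hor bh c) (κ : X.Sq g l u bo), X.Bicart κ) ∧
  (∀ {a b : X.Obj} (u : X.Ver a b), X.Bicart (X.hIdSq u)) ∧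
  (∀ {a b : X.Obj} (g : X.Hor a b), X.Bicart (X.vIdSq g)) ∧
  (∀ {a b c a' b' c' : X.Obj} {t1 : X.Hor a b} {t2 : X.Hor b c} {l : X.Ver a a'}
      {m : X.Ver b b'} {r : X.Ver c c'} {b1 : X.Hor a' b'} {b2 : X.Hor b' c'}
      (κ1 : X.Sq t1 l m b1) (κ2 : X.Sq t2 m r b2),
      X.Bicart κ1 → X.Bicart κ2 → X.Bicart (X.hSq κ1 κ2)) ∧
  (∀ {a b c d e f : X.Obj} {t : X.Hor a b} {l : X.Ver a c} {r : X.Ver b d} {m : X.Hor c d}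
      {l' : X.Ver c e} {r' : X.Ver d f} {bo : X.Hor e f}
      (κ1 : X.Sq t l r m) (κ2 : X.Sq m l' r' bo),
      X.Bicart κ1 → X.Bicart κ2 → X.Bicart (X.vSq κ1 κ2))

/-- Codomain-discrete double category: every top-right corner fills into a unique square. -/
def CodDiscrete : Prop :=
  ∀ {a b c : X.Obj} (g : X.Hor a b) (u : X.Ver b c),
    ∃! p : Σ' (bh : X.Obj) (l : X.Ver a bh) (bo : X.Hor bh c), X.Sq g l u bo, True

/-- Every top-right corner can be filled into (at least) one square. -/
def CornerFill : Prop :=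
  ∀ {a b c : X.Obj} (g : X.Hor a b) (u : X.Ver b c),
    ∃ (bh : X.Obj) (l : X.Ver a bh) (bo : X.Hor bh c), Nonempty (X.Sq g l u bo)

def AllOpcart : Prop :=
  ∀ {a b c d : X.Obj} {t : X.Hor a b} {l : X.Ver a c} {r : X.Ver b d} {bo : X.Hor c d}
    (κ : X.Sq t l r bo), X.Opcart κ

def AllBicart : Prop :=
  ∀ {a b c d : X.Obj} {t : X.Hor a b} {l : X.Ver a c} {r : X.Ver b d} {bo : X.Hor c d}
    (κ : X.Sq t l r bo), X.Bicart κ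

def HIso {a b : X.Obj} (g : X.Hor a b) : Prop :=
  ∃ g' : X.Hor b a, X.hComp g g' = X.hId a ∧ X.hComp g' g = X.hId b

def VIso {a b : X.Obj} (u : X.Ver a b) : Prop :=
  ∃ u' : X.Ver b a, X.vComp u u' = X.vId a ∧ X.vComp u' u = X.vId b

/-- Strict horizontal invariance. -/
def HorInvariant : Prop :=
  ∀ {a b c d : X.Obj} (g : X.Hor a b) (h : X.Hor c d) (u : X.Ver b d),
    X.HIso g → X.HIso h → ∃! _p : Σ' w : X.Ver a c, X.Sq g w u h, True

/-- Strict vertical invariance. -/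
def VerInvariant : Prop :=
  ∀ {a b c d : X.Obj} (g : X.Hor a b) (u : X.Ver a c) (v : X.Ver b d),
    X.VIso u → X.VIso v → ∃! _p : Σ' h : X.Hor c d, X.Sq g u v h, True

def Invariant : Prop := X.HorInvariant ∧ X.VerInvariant

/-- The top-left corner `(π₁, π₂)` of the vertical dual `Xᵛ`, expressed in `X`
(`π₁ : a → a'` vertical in `X`, `π₂ : a' → b` horizontal), is jointly monic. -/
def JMonicVDual {a a' b : X.Obj} (π₁ : X.Ver a a') (π₂ : X.Hor a' b) : Prop :=
  ∀ {a'' : X.Obj} (θ θ' : X.Ver a' a'') (ψ ψ' : X.Hor a'' a')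
    (_κ1 : X.Sq (X.hId a') θ (X.vId a') ψ) (_κ2 : X.Sq (X.hId a') θ' (X.vId a') ψ'),
    X.vComp π₁ θ = X.vComp π₁ θ' → X.hComp ψ π₂ = X.hComp ψ' π₂ → θ = θ' ∧ ψ = ψ'

/-- Factorization double category. -/
def IsFactDbl : Prop :=
  X.Invariant ∧ X.CornerFill ∧ X.AllBicart ∧
  (∀ {a a' b : X.Obj} (π₁ : X.Ver a a') (π₂ : X.Hor a' b), X.JMonicVDual π₁ π₂)

/-- A corner from `a` to `b`: a vertical morphism followed by a horizontal one. -/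
structure Corner (a b : X.Obj) : Type u where
  mid : X.Obj
  v : X.Ver a mid
  h : X.Hor mid b

/-- A 2-cell between corners. -/
def CellRel {a b : X.Obj} (c1 c2 : X.Corner a b) : Prop :=
  ∃ (θ : X.Ver c1.mid c2.mid) (_β : X.Sq c1.h θ (X.vId b) c2.h), X.vComp c1.v θ = c2.v

/-- Morphisms of the category of corners: corners modulo zigzags of 2-cells. -/
def CnrHom (a b : X.Obj) : Type u := Quot (fun c1 c2 : X.Corner a b => X.CellRel c1 c2)

def mkCnr {a b : X.Obj} (c : X.Corner a b) : X.CnrHom a b := Quot.mk _ c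

/-- The vertical corner `[u, 1]`. -/
def mkE {a b : X.Obj} (u : X.Ver a b) : X.CnrHom a b := X.mkCnr ⟨b, u, X.hId b⟩

/-- The horizontal corner `[1, g]`. -/
def mkM {a b : X.Obj} (g : X.Hor a b) : X.CnrHom a b := X.mkCnr ⟨a, X.vId a, g⟩

/-- The identity corner `[1ₐ, 1ₐ]`. -/
def cnrId (a : X.Obj) : X.CnrHom a a := X.mkCnr ⟨a, X.vId a, X.hId a⟩

/-- A composition operation on corners which is computed by filling the middle
corner with (any) opcartesian square. -/
structure CnrStruct (X : DblCat.{u}) where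
  comp : ∀ {a b c : X.Obj}, X.CnrHom a b → X.CnrHom b c → X.CnrHom a c
  compat : ∀ {a m1 b m2 c bh : X.Obj} (u : X.Ver a m1) (g : X.Hor m1 b)
    (v : X.Ver b m2) (h : X.Hor m2 c)
    (w : X.Ver m1 bh) (bo : X.Hor bh m2) (κ : X.Sq g w v bo), X.Opcart κ →
    comp (X.mkCnr ⟨m1, u, g⟩) (X.mkCnr ⟨m2, v, h⟩) =
      X.mkCnr ⟨bh, X.vComp u w, X.hComp bo h⟩

/-- The category of corners: a corner composition which is unital and associative. -/
structure CnrCat (X : DblCat.{u}) extends CnrStruct X where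
  id_comp : ∀ {a b : X.Obj} (f : X.CnrHom a b), comp (X.cnrId a) f = f
  comp_id : ∀ {a b : X.Obj} (f : X.CnrHom a b), comp f (X.cnrId b) = f
  assoc : ∀ {a b c d : X.Obj} (f : X.CnrHom a b) (g : X.CnrHom b c) (h : X.CnrHom c d),
    comp (comp f g) h = comp f (comp g h)

/-- The class `E_X` of vertical corners. -/
def InE {a b : X.Obj} (f : X.CnrHom a b) : Prop := ∃ u : X.Ver a b, f = X.mkE u

/-- The class `M_X` of horizontal corners. -/
def InM {a b : X.Obj} (f : X.CnrHom a b) : Prop := ∃ g : X.Hor a b, f = X.mkM g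

/-- Isomorphisms in the category of corners. -/
def CnrIso (c : CnrStruct X) {a b : X.Obj} (f : X.CnrHom a b) : Prop :=
  ∃ g : X.CnrHom b a, c.comp f g = X.cnrId a ∧ c.comp g f = X.cnrId b

end DblCat

end Paper


namespace Paper

namespace DblCat

variable {X : DblCat.{u}}

/-- Cast a square along equalities of its boundary edges. -/
def castSq {a b c d : X.Obj} {t t' : X.Hor a b} {l l' : X.Ver a c} {r r' : X.Ver b d}
    {bo bo' : X.Hor c d} (et : t = t') (el : l = l') (er : r = r') (eb : bo = bo')
    (α : X.Sq t l r bo) : X.Sq t' l' r' bo' := by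
  subst et; subst el; subst er; subst eb; exact α

theorem heq_castSq {a b c d : X.Obj} {t t' : X.Hor a b} {l l' : X.Ver a c} {r r' : X.Ver b d}
    {bo bo' : X.Hor c d} (et : t = t') (el : l = l') (er : r = r') (eb : bo = bo')
    (α : X.Sq t l r bo) : HEq (castSq et el er eb α) α := by
  subst et; subst el; subst er; subst eb; rfl

theorem vSq_congr {a b c d e f : X.Obj}
    {t t' : X.Hor a b} {l l' : X.Ver a c} {r r' : X.Ver b d} {m m' : X.Hor c d}
    {l2 l2' : X.Ver c e} {r2 r2' : X.Ver d f} {bo bo' : X.Hor e f}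
    (ht : t = t') (hl : l = l') (hr : r = r') (hm : m = m')
    (hl2 : l2 = l2') (hr2 : r2 = r2') (hbo : bo = bo')
    {α : X.Sq t l r m} {α' : X.Sq t' l' r' m'}
    {β : X.Sq m l2 r2 bo} {β' : X.Sq m' l2' r2' bo'}
    (hα : HEq α α') (hβ : HEq β β') : HEq (X.vSq α β) (X.vSq α' β') := by
  subst ht; subst hl; subst hr; subst hm; subst hl2; subst hr2; subst hbo
  rw [eq_of_heq hα, eq_of_heq hβ]

theorem hSq_congr {a b c a' b' c' : X.Obj} {t1 t1' : X.Hor a b} {t2 t2' : X.Hor b c}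
    {l l' : X.Ver a a'} {m m' : X.Ver b b'} {r r' : X.Ver c c'}
    {b1 b1' : X.Hor a' b'} {b2 b2' : X.Hor b' c'}
    (e1 : t1 = t1') (e2 : t2 = t2') (e3 : l = l') (e4 : m = m') (e5 : r = r')
    (e6 : b1 = b1') (e7 : b2 = b2')
    {α : X.Sq t1 l m b1} {α' : X.Sq t1' l' m' b1'}
    {β : X.Sq t2 m r b2} {β' : X.Sq t2' m' r' b2'}
    (hα : HEq α α') (hβ : HEq β β') : HEq (X.hSq α β) (X.hSq α' β') := by
  subst e1; subst e2; subst e3; subst e4; subst e5; subst e6; subst e7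
  rw [eq_of_heq hα, eq_of_heq hβ]

theorem viso_vId (a : X.Obj) : X.VIso (X.vId a) :=
  ⟨X.vId a, X.vId_comp _, X.vId_comp _⟩

theorem hiso_hId (a : X.Obj) : X.HIso (X.hId a) :=
  ⟨X.hId a, X.hId_comp _, X.hId_comp _⟩

theorem viso_comp {a b c : X.Obj} {v : X.Ver a b} {w : X.Ver b c}
    (hv : X.VIso v) (hw : X.VIso w) : X.VIso (X.vComp v w) := by
  obtain ⟨v', hv1, hv2⟩ := hv
  obtain ⟨w', hw1, hw2⟩ := hw
  refine ⟨X.vComp w' v', ?_, ?_⟩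
  · rw [X.vAssoc, ← X.vAssoc w w' v', hw1, X.vId_comp, hv1]
  · rw [X.vAssoc, ← X.vAssoc v' v w, hv2, X.vId_comp, hw2]

theorem hiso_comp {a b c : X.Obj} {g : X.Hor a b} {k : X.Hor b c}
    (hg : X.HIso g) (hk : X.HIso k) : X.HIso (X.hComp g k) := by
  obtain ⟨g', hg1, hg2⟩ := hg
  obtain ⟨k', hk1, hk2⟩ := hk
  refine ⟨X.hComp k' g', ?_, ?_⟩
  · rw [X.hAssoc, ← X.hAssoc k k' g', hk1, X.hId_comp, hg1]
  · rw [X.hAssoc, ← X.hAssoc g' g k, hg2, X.hId_comp, hk2]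

theorem viso_cancel {a b c : X.Obj} {v : X.Ver a b} {θ : X.Ver b c}
    (hθ : X.VIso θ) (h : X.VIso (X.vComp v θ)) : X.VIso v := by
  obtain ⟨θ', h1, h2⟩ := hθ
  have hv : v = X.vComp (X.vComp v θ) θ' := by rw [X.vAssoc, h1, X.vComp_id]
  rw [hv]
  exact viso_comp h ⟨θ, h2, h1⟩

theorem viso_two_sided {a b : X.Obj} {u : X.Ver a b} {t : X.Ver b a}
    (h1 : X.VIso (X.vComp u t)) (h2 : X.VIso (X.vComp t u)) : X.VIso u := by
  obtain ⟨i, hi1, _⟩ := h1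
  obtain ⟨j, _, hj2⟩ := h2
  have hux : X.vComp u (X.vComp t i) = X.vId a := by rw [← X.vAssoc]; exact hi1
  have hx : X.vComp t i = X.vComp j t := by
    calc X.vComp t i = X.vComp (X.vComp j (X.vComp t u)) (X.vComp t i) := by
          rw [hj2, X.vId_comp]
      _ = X.vComp j (X.vComp t (X.vComp u (X.vComp t i))) := by rw [X.vAssoc, X.vAssoc]
      _ = X.vComp j t := by rw [hux, X.vComp_id]
  refine ⟨X.vComp t i, hux, ?_⟩
  rw [hx, X.vAssoc]
  exact hj2

theorem hiso_two_sided {a b : X.Obj} {g : X.Hor a b} {t : X.Hor b a}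
    (h1 : X.HIso (X.hComp g t)) (h2 : X.HIso (X.hComp t g)) : X.HIso g := by
  obtain ⟨i, hi1, _⟩ := h1
  obtain ⟨j, _, hj2⟩ := h2
  have hux : X.hComp g (X.hComp t i) = X.hId a := by rw [← X.hAssoc]; exact hi1
  have hx : X.hComp t i = X.hComp j t := by
    calc X.hComp t i = X.hComp (X.hComp j (X.hComp t g)) (X.hComp t i) := by
          rw [hj2, X.hId_comp]
      _ = X.hComp j (X.hComp t (X.hComp g (X.hComp t i))) := by rw [X.hAssoc, X.hAssoc]
      _ = X.hComp j t := by rw [hux, X.hComp_id]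
  refine ⟨X.hComp t i, hux, ?_⟩
  rw [hx, X.hAssoc]
  exact hj2

theorem mkE_def {a b : X.Obj} (u : X.Ver a b) : X.mkE u = X.mkCnr ⟨b, u, X.hId b⟩ := rfl

theorem mkM_def {a b : X.Obj} (g : X.Hor a b) : X.mkM g = X.mkCnr ⟨a, X.vId a, g⟩ := rfl

theorem cnrId_def (a : X.Obj) : X.cnrId a = X.mkCnr ⟨a, X.vId a, X.hId a⟩ := rfl

/-- With vertical invariance, the bottom of a square is determined by the other three
edges, whenever the two vertical edges are invertible. -/
theorem bot_unique (hver : X.VerInvariant) {a b c d : X.Obj} {t : X.Hor a b}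
    {l : X.Ver a c} {r : X.Ver b d} {k1 k2 : X.Hor c d}
    (hl : X.VIso l) (hr : X.VIso r) (s1 : X.Sq t l r k1) (s2 : X.Sq t l r k2) :
    k1 = k2 := by
  obtain ⟨p, -, hu⟩ := hver t l r hl hr
  have e1 := hu ⟨k1, s1⟩ trivial
  have e2 := hu ⟨k2, s2⟩ trivial
  exact congrArg (fun q => q.1) (e1.trans e2.symm)

/-- In a double category all of whose squares are bicartesian, the vertical component
of any 2-cell between corners is invertible. -/
theorem cell_theta_viso (hbi : X.AllBicart) {m1 m2 b : X.Obj} {h1 : X.Hor m1 b}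
    {θ : X.Ver m1 m2} {h2 : X.Hor m2 b} (β : X.Sq h1 θ (X.vId b) h2) : X.VIso θ := by
  have e1 : X.vId b = X.vComp (X.vId b) (X.vId b) := (X.vId_comp (X.vId b)).symm
  obtain ⟨⟨θ', σ⟩, ⟨hret, hsq⟩, -⟩ :=
    (hbi β).1 (X.vId m1) (X.vId b) h1 (castSq rfl rfl e1 rfl (X.vIdSq h1))
  obtain ⟨p₀, -, huniq⟩ := (hbi β).1 θ (X.vId b) h2 (castSq rfl rfl e1 rfl β)
  have hA : (⟨X.vId m2, X.vIdSq h2⟩ :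
      Σ' θ₀ : X.Ver m2 m2, X.Sq h2 θ₀ (X.vId b) h2) = p₀ := by
    refine huniq _ ⟨X.vComp_id θ, ?_⟩
    exact (X.vSq_comp_id β).trans (heq_castSq rfl rfl e1 rfl β).symm
  have hB : (⟨X.vComp θ' θ, castSq rfl rfl (X.vId_comp (X.vId b)) rfl (X.vSq σ β)⟩ :
      Σ' θ₀ : X.Ver m2 m2, X.Sq h2 θ₀ (X.vId b) h2) = p₀ := by
    refine huniq _ ⟨?_, ?_⟩
    · rw [← X.vAssoc, hret, X.vId_comp]
    · have s1 : HEq (X.vSq β (castSq rfl rfl (X.vId_comp (X.vId b)) rfl (X.vSq σ β)))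
          (X.vSq β (X.vSq σ β)) :=
        vSq_congr rfl rfl rfl rfl rfl (X.vId_comp (X.vId b)).symm rfl HEq.rfl
          (heq_castSq rfl rfl (X.vId_comp (X.vId b)) rfl (X.vSq σ β))
      have s2 : HEq (X.vSq β (X.vSq σ β)) (X.vSq (X.vSq β σ) β) :=
        (X.vSq_assoc β σ β).symm
      have s3 : HEq (X.vSq β σ) (X.vIdSq h1) :=
        hsq.trans (heq_castSq rfl rfl e1 rfl (X.vIdSq h1))
      have s4 : HEq (X.vSq (X.vSq β σ) β) (X.vSq (X.vIdSq h1) β) :=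
        vSq_congr rfl hret (X.vId_comp (X.vId b)) rfl rfl rfl rfl s3 HEq.rfl
      have s5 : HEq (X.vSq (X.vIdSq h1) β) β := X.vSq_id_comp β
      exact ((((s1.trans s2).trans s4).trans s5)).trans (heq_castSq rfl rfl e1 rfl β).symm
  have hfst : X.vId m2 = X.vComp θ' θ :=
    congrArg (fun q => q.1) (hA.trans hB.symm)
  exact ⟨θ', hret, hfst.symm⟩

/-- The horizontal components of a 2-cell between corners are linked by a horizontal
isomorphism. -/
theorem cell_hor (hbi : X.AllBicart) (hver : X.VerInvariant) {m1 m2 b : X.Obj}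
    {h1 : X.Hor m1 b} {θ : X.Ver m1 m2} {h2 : X.Hor m2 b} (β : X.Sq h1 θ (X.vId b) h2) :
    ∃ (ψ : X.Hor m1 m2) (ψ' : X.Hor m2 m1),
      X.hComp ψ ψ' = X.hId m1 ∧ X.hComp ψ' ψ = X.hId m2 ∧
      X.hComp ψ h2 = h1 ∧ X.hComp ψ' h1 = h2 := by
  have hθ : X.VIso θ := cell_theta_viso hbi β
  obtain ⟨⟨ψ, τ⟩, hτ, -⟩ := (hbi β).2 (X.vId m1) h1 (X.vIdSq h1)
  obtain ⟨⟨ψ', τ'⟩, hτ', -⟩ := (hbi (X.vIdSq h1)).2 θ h2 β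
  have b1 : X.hComp ψ h2 = h1 :=
    bot_unique hver (viso_vId m1) (viso_vId b)
      (castSq (X.hId_comp h1) rfl rfl rfl (X.hSq τ β)) (X.vIdSq h1)
  have b2 : X.hComp ψ' h1 = h2 :=
    bot_unique hver hθ (viso_vId b)
      (castSq (X.hId_comp h1) rfl rfl rfl (X.hSq τ' (X.vIdSq h1))) β
  -- ψ ∘ ψ' = 1
  obtain ⟨q₁, -, uniq1⟩ := (hbi (X.vIdSq h1)).2 (X.vId m1) h1 (X.vIdSq h1)
  have hA1 : (⟨X.hId m1, X.vIdSq (X.hId m1)⟩ :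
      Σ' χ : X.Hor m1 m1, X.Sq (X.hId m1) (X.vId m1) (X.vId m1) χ) = q₁ := by
    refine uniq1 _ ?_
    refine HEq.trans (heq_of_eq (X.vIdSq_hComp (X.hId m1) h1).symm) ?_
    rw [X.hId_comp]
  have hB1 : (⟨X.hComp ψ ψ', castSq (X.hId_comp (X.hId m1)) rfl rfl rfl (X.hSq τ τ')⟩ :
      Σ' χ : X.Hor m1 m1, X.Sq (X.hId m1) (X.vId m1) (X.vId m1) χ) = q₁ := by
    refine uniq1 _ ?_
    refine HEq.trans (hSq_congr (X.hId_comp (X.hId m1)).symm rfl rfl rfl rfl rfl rfl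
      (heq_castSq (X.hId_comp (X.hId m1)) rfl rfl rfl (X.hSq τ τ')) HEq.rfl) ?_
    refine HEq.trans (X.hSq_assoc τ τ' (X.vIdSq h1)) ?_
    refine HEq.trans (hSq_congr rfl (X.hId_comp h1) rfl rfl rfl rfl b2 HEq.rfl hτ') ?_
    exact hτ
  have eq1 : X.hId m1 = X.hComp ψ ψ' := congrArg (fun q => q.1) (hA1.trans hB1.symm)
  -- ψ' ∘ ψ = 1
  obtain ⟨q₂, -, uniq2⟩ := (hbi β).2 θ h2 β
  have hA2 : (⟨X.hId m2, X.hIdSq θ⟩ :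
      Σ' χ : X.Hor m2 m2, X.Sq (X.hId m1) θ θ χ) = q₂ :=
    uniq2 _ (X.hSq_id_comp β)
  have hB2 : (⟨X.hComp ψ' ψ, castSq (X.hId_comp (X.hId m1)) rfl rfl rfl (X.hSq τ' τ)⟩ :
      Σ' χ : X.Hor m2 m2, X.Sq (X.hId m1) θ θ χ) = q₂ := by
    refine uniq2 _ ?_
    refine HEq.trans (hSq_congr (X.hId_comp (X.hId m1)).symm rfl rfl rfl rfl rfl rfl
      (heq_castSq (X.hId_comp (X.hId m1)) rfl rfl rfl (X.hSq τ' τ)) HEq.rfl) ?_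
    refine HEq.trans (X.hSq_assoc τ' τ β) ?_
    refine HEq.trans (hSq_congr rfl (X.hId_comp h1) rfl rfl rfl rfl b1 HEq.rfl hτ) ?_
    exact hτ'
  have eq2 : X.hId m2 = X.hComp ψ' ψ := congrArg (fun q => q.1) (hA2.trans hB2.symm)
  exact ⟨ψ, ψ', eq1.symm, eq2.symm, b1, b2⟩

theorem cell_viso_iff (hbi : X.AllBicart) {a b : X.Obj} {c1 c2 : X.Corner a b}
    (h : X.CellRel c1 c2) : X.VIso c1.v ↔ X.VIso c2.v := by
  obtain ⟨θ, β, hv⟩ := h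
  have hθ := cell_theta_viso hbi β
  constructor
  · intro h1; rw [← hv]; exact viso_comp h1 hθ
  · intro h2; rw [← hv] at h2; exact viso_cancel hθ h2

theorem cell_hiso_iff (hbi : X.AllBicart) (hver : X.VerInvariant) {a b : X.Obj}
    {c1 c2 : X.Corner a b} (h : X.CellRel c1 c2) : X.HIso c1.h ↔ X.HIso c2.h := by
  obtain ⟨θ, β, -⟩ := h
  obtain ⟨ψ, ψ', e1, e2, e3, e4⟩ := cell_hor hbi hver β
  constructor
  · intro hh; rw [← e4]; exact hiso_comp ⟨ψ, e2, e1⟩ hh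
  · intro hh; rw [← e3]; exact hiso_comp ⟨ψ', e1, e2⟩ hh

theorem eq_viso_iff (hbi : X.AllBicart) {a b : X.Obj} {c1 c2 : X.Corner a b}
    (h : X.mkCnr c1 = X.mkCnr c2) : X.VIso c1.v ↔ X.VIso c2.v :=
  iff_of_eq (congrArg (Quot.lift (fun cc : X.Corner a b => X.VIso cc.v)
    (fun _ _ hc => propext (cell_viso_iff hbi hc))) h)

theorem eq_hiso_iff (hbi : X.AllBicart) (hver : X.VerInvariant) {a b : X.Obj}
    {c1 c2 : X.Corner a b} (h : X.mkCnr c1 = X.mkCnr c2) : X.HIso c1.h ↔ X.HIso c2.h :=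
  iff_of_eq (congrArg (Quot.lift (fun cc : X.Corner a b => X.HIso cc.h)
    (fun _ _ hc => propext (cell_hiso_iff hbi hver hc))) h)

theorem inE_of_hiso (hhor : X.HorInvariant) {a x b : X.Obj} (u : X.Ver a x)
    (g : X.Hor x b) (hg : X.HIso g) : X.InE (X.mkCnr ⟨x, u, g⟩) := by
  obtain ⟨⟨θ, β⟩, -, -⟩ := hhor g (X.hId b) (X.vId b) hg (hiso_hId b)
  exact ⟨X.vComp u θ, Quot.sound ⟨θ, β, rfl⟩⟩

theorem inM_of_viso (hver : X.VerInvariant) {a x b : X.Obj} (u : X.Ver a x)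
    (g : X.Hor x b) (hu : X.VIso u) : X.InM (X.mkCnr ⟨x, u, g⟩) := by
  obtain ⟨u', h1, h2⟩ := hu
  obtain ⟨⟨k, β⟩, -, -⟩ := hver g u' (X.vId b) ⟨u, h2, h1⟩ (viso_vId b)
  exact ⟨k, Quot.sound ⟨u', β, h1⟩⟩

theorem comp_factor (hbi : X.AllBicart) (c : CnrCat X) {a x b : X.Obj}
    (u : X.Ver a x) (g : X.Hor x b) :
    c.comp (X.mkE u) (X.mkM g) = X.mkCnr ⟨x, u, g⟩ := by
  have h := c.compat u (X.hId x) (X.vId x) g (X.vId x) (X.hId x) (X.hIdSq (X.vId x))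
    ((hbi _).1)
  rw [mkE_def, mkM_def, h, X.vComp_id, X.hId_comp]

theorem compE (hbi : X.AllBicart) (c : CnrCat X) {a x x' : X.Obj}
    (u : X.Ver a x) (u' : X.Ver x x') :
    c.comp (X.mkE u) (X.mkE u') = X.mkE (X.vComp u u') := by
  have h := c.compat u (X.hId x) u' (X.hId x') u' (X.hId x') (X.hIdSq u') ((hbi _).1)
  rw [mkE_def, mkE_def, h, X.hId_comp, ← mkE_def]

theorem compM (hbi : X.AllBicart) (c : CnrCat X) {a b b' : X.Obj}
    (g : X.Hor a b) (g' : X.Hor b b') :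
    c.comp (X.mkM g) (X.mkM g') = X.mkM (X.hComp g g') := by
  have h := c.compat (X.vId a) g (X.vId b) g' (X.vId a) g (X.vIdSq g) ((hbi _).1)
  rw [mkM_def, mkM_def, h, X.vComp_id, ← mkM_def]

theorem comp_mkM_right (hbi : X.AllBicart) (c : CnrCat X) {a x b b' : X.Obj}
    (u : X.Ver a x) (g : X.Hor x b) (h' : X.Hor b b') :
    c.comp (X.mkCnr ⟨x, u, g⟩) (X.mkM h') = X.mkCnr ⟨x, u, X.hComp g h'⟩ := by
  have h := c.compat u g (X.vId b) h' (X.vId x) g (X.vIdSq g) ((hbi _).1)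
  rw [mkM_def, h, X.vComp_id]

theorem comp_mkE_left (hbi : X.AllBicart) (c : CnrCat X) {a y m b : X.Obj}
    (v : X.Ver a y) (w : X.Ver y m) (bo : X.Hor m b) :
    c.comp (X.mkE v) (X.mkCnr ⟨m, w, bo⟩) = X.mkCnr ⟨m, X.vComp v w, bo⟩ := by
  have h := c.compat v (X.hId y) w bo w (X.hId m) (X.hIdSq w) ((hbi _).1)
  rw [mkE_def, h, X.hId_comp]

theorem comp_mkM_mkE (hbi : X.AllBicart) (c : CnrCat X) {x b y bh : X.Obj}
    {g : X.Hor x b} {v : X.Ver b y} {w : X.Ver x bh} {bo : X.Hor bh y}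
    (κ : X.Sq g w v bo) :
    c.comp (X.mkM g) (X.mkE v) = X.mkCnr ⟨bh, w, bo⟩ := by
  have h := c.compat (X.vId x) g v (X.hId y) w bo κ ((hbi κ).1)
  rw [mkM_def, mkE_def, h, X.vId_comp, X.hComp_id]

end DblCat

end Paper

namespace Paper

open DblCat in
/-- If every top-right corner of `X` fills into a square, every
square is bicartesian and `X` is invariant, then every isomorphism of `Cnr X` lies in
`E_X ∩ M_X`; in particular a corner whose horizontal part is invertible lies in `E_X`,
and one whose vertical part is invertible lies in `M_X`. -/
theorem statement11 (X : DblCat.{u}) (hfill : X.CornerFill) (hbi : X.AllBicart)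
    (hinv : X.Invariant) (c : CnrCat X) :
    (∀ {a b : X.Obj} (f : X.CnrHom a b), X.CnrIso c.toCnrStruct f → X.InE f ∧ X.InM f) ∧
    (∀ {a x b : X.Obj} (u : X.Ver a x) (g : X.Hor x b),
        X.HIso g → X.InE (X.mkCnr ⟨x, u, g⟩)) ∧
    (∀ {a x b : X.Obj} (u : X.Ver a x) (g : X.Hor x b),
        X.VIso u → X.InM (X.mkCnr ⟨x, u, g⟩)) := by
  obtain ⟨hhor, hver⟩ := hinv
  refine ⟨?_, fun {a x b} u g hg => inE_of_hiso hhor u g hg,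
    fun {a x b} u g hu => inM_of_viso hver u g hu⟩
  intro a b f hf
  obtain ⟨fi, hfi1, hfi2⟩ := hf
  revert hfi1 hfi2
  induction f using Quot.ind with
  | _ cf =>
  induction fi using Quot.ind with
  | _ cfi =>
  obtain ⟨x, u, g⟩ := cf
  obtain ⟨y, v, h⟩ := cfi
  intro hfi1 hfi2
  have hf1 : c.comp (X.mkCnr ⟨x, u, g⟩) (X.mkCnr ⟨y, v, h⟩) = X.cnrId a := hfi1
  have hf2 : c.comp (X.mkCnr ⟨y, v, h⟩) (X.mkCnr ⟨x, u, g⟩) = X.cnrId b := hfi2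
  obtain ⟨bh, w, bo, ⟨κ⟩⟩ := hfill g v
  obtain ⟨bh', w', bo', ⟨κ'⟩⟩ := hfill h u
  have e1 : c.comp (X.mkCnr ⟨x, u, g⟩) (X.mkCnr ⟨y, v, h⟩) =
      X.mkCnr ⟨bh, X.vComp u w, X.hComp bo h⟩ := c.compat u g v h w bo κ (hbi κ).1
  have e2 : c.comp (X.mkCnr ⟨y, v, h⟩) (X.mkCnr ⟨x, u, g⟩) =
      X.mkCnr ⟨bh', X.vComp v w', X.hComp bo' g⟩ := c.compat v h u g w' bo' κ' (hbi κ').1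
  have hFh : X.HIso (X.hComp bo h) :=
    (eq_hiso_iff hbi hver ((e1.symm.trans hf1).trans (cnrId_def a))).mpr (hiso_hId a)
  have hFv : X.VIso (X.vComp v w') :=
    (eq_viso_iff hbi ((e2.symm.trans hf2).trans (cnrId_def b))).mpr (viso_vId b)
  -- the γ part: γ := fi ∘ (mkE u) is a horizontal corner
  have hγ : c.comp (X.mkCnr ⟨y, v, h⟩) (X.mkE u) = X.mkCnr ⟨bh', X.vComp v w', bo'⟩ := by
    rw [← comp_factor hbi c v h, c.assoc, comp_mkM_mkE hbi c κ', comp_mkE_left hbi c]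
  obtain ⟨G₃, hG₃⟩ := inM_of_viso hver (X.vComp v w') bo' hFv
  have key1 : X.HIso (X.hComp G₃ g) := by
    have hh : X.mkM (X.hComp G₃ g) = X.cnrId b := by
      rw [← compM hbi c, ← hG₃, ← hγ, c.assoc, comp_factor hbi c u g]
      exact hf2
    exact (eq_hiso_iff hbi hver (((mkM_def _).symm.trans hh).trans (cnrId_def b))).mpr
      (hiso_hId b)
  have key2 : X.HIso (X.hComp g G₃) := by
    have hh : X.mkCnr ⟨x, u, X.hComp g G₃⟩ = X.mkE u := by
      rw [← comp_mkM_right hbi c u g G₃, ← hG₃, ← hγ, ← c.assoc, hf1, c.id_comp]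
    exact (eq_hiso_iff hbi hver (hh.trans (mkE_def u))).mpr (hiso_hId x)
  have hg : X.HIso g := hiso_two_sided key2 key1
  -- the δ part: δ := (mkM g) ∘ fi is a vertical corner
  have hδ : c.comp (X.mkM g) (X.mkCnr ⟨y, v, h⟩) = X.mkCnr ⟨bh, w, X.hComp bo h⟩ := by
    rw [← comp_factor hbi c v h, ← c.assoc, comp_mkM_mkE hbi c κ,
      comp_mkM_right hbi c w bo h]
  obtain ⟨U₃, hU₃⟩ := inE_of_hiso hhor w (X.hComp bo h) hFh
  have key3 : X.VIso (X.vComp u U₃) := by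
    have hh : X.mkE (X.vComp u U₃) = X.cnrId a := by
      rw [← compE hbi c, ← hU₃, ← hδ, ← c.assoc, comp_factor hbi c u g]
      exact hf1
    exact (eq_viso_iff hbi (((mkE_def _).symm.trans hh).trans (cnrId_def a))).mpr
      (viso_vId a)
  have key4 : X.VIso (X.vComp U₃ u) := by
    have hh : X.mkCnr ⟨x, X.vComp U₃ u, g⟩ = X.mkM g := by
      rw [← comp_factor hbi c (X.vComp U₃ u) g, ← compE hbi c, c.assoc,
        comp_factor hbi c u g, ← hU₃, ← hδ, c.assoc, hf2, c.comp_id]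
    exact (eq_viso_iff hbi (hh.trans (mkM_def g))).mpr (viso_vId x)
  have hu : X.VIso u := viso_two_sided key3 key4
  exact ⟨inE_of_hiso hhor u g hg, inM_of_viso hver u g hu⟩

end Paper
end

section
/- In the category Span(Set) of sets and isomorphism classes of spans, the two canonical classes (spans with identity forward leg, and spans with identity backward leg) do NOT form an orthogonal factorization system: concretely, the span (!,!) : * → * given by the two-element set 2 with both legs the unique maps admits the factorization [!,1]∘[1,!] through 2, and both the identity span on 2 and the span [sw,1] given by the nontrivial automorphism sw of 2 are (distinct) comparison morphisms between this factorization and itself, violating uniqueness of the comparison morphism. -/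
/-!
Composing with `[sw, 1]` only replaces the middle object `2` of `[!, 1]` and `[1, !]` by an
isomorphic span (sw is an automorphism over the point), so `[sw, 1]` is a second comparison
morphism next to the identity, and it differs from the identity because a span isomorphism
from `[sw, 1]` to `[1, 1]` would have to equal both `sw` and `1`.
-/

open CategoryTheory

universe u v

namespace Paper

/-- A span from `a` to `b` in `C`. -/
structure SpanCorner (C : Type u) [Category.{v} C] (a b : C) : Type (max u v) where
  mid : C
  l : mid ⟶ a
  r : mid ⟶ b

/-- Isomorphism of spans. -/
def SpanRel (C : Type u) [Category.{v} C] {a b : C} (s t : SpanCorner C a b) : Prop :=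
  ∃ e : s.mid ≅ t.mid, e.hom ≫ t.l = s.l ∧ e.hom ≫ t.r = s.r

/-- Morphisms of the span category: isomorphism classes of spans. -/
def SpanHom (C : Type u) [Category.{v} C] (a b : C) : Type (max u v) :=
  Quot (fun s t : SpanCorner C a b => SpanRel C s t)

def mkSpan {C : Type u} [Category.{v} C] {a b : C} (mid : C) (l : mid ⟶ a) (r : mid ⟶ b) :
    SpanHom C a b :=
  Quot.mk _ ⟨mid, l, r⟩

/-- The category `Span C`: a composition of classes of spans, computed by (any)
pullback, which is unital and associative. -/
structure SpanCat (C : Type u) [Category.{v} C] where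
  comp : ∀ {a b c : C}, SpanHom C a b → SpanHom C b c → SpanHom C a c
  compat : ∀ {a b c : C} (s : SpanCorner C a b) (t : SpanCorner C b c)
    (P : C) (p1 : P ⟶ s.mid) (p2 : P ⟶ t.mid),
    IsPullback p1 p2 s.r t.l →
    comp (Quot.mk _ s) (Quot.mk _ t) = mkSpan P (p1 ≫ s.l) (p2 ≫ t.r)
  id_comp : ∀ {a b : C} (f : SpanHom C a b), comp (mkSpan a (𝟙 a) (𝟙 a)) f = f
  comp_id : ∀ {a b : C} (f : SpanHom C a b), comp f (mkSpan b (𝟙 b) (𝟙 b)) = f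
  assoc : ∀ {a b c d : C} (f : SpanHom C a b) (g : SpanHom C b c) (h : SpanHom C c d),
    comp (comp f g) h = comp f (comp g h)

/-- The class of spans with identity forward leg. -/
def SpanInE {C : Type u} [Category.{v} C] {a b : C} (f : SpanHom C a b) : Prop :=
  ∃ u : b ⟶ a, f = mkSpan b u (𝟙 b)

/-- The class of spans with identity backward leg. -/
def SpanInM {C : Type u} [Category.{v} C] {a b : C} (f : SpanHom C a b) : Prop :=
  ∃ g : a ⟶ b, f = mkSpan a (𝟙 a) g

/-- Left lifting property against all maps in `M`. -/
def SpanLLP {C : Type u} [Category.{v} C] (S : SpanCat C)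
    (M : ∀ {x y : C}, SpanHom C x y → Prop) {a b : C} (f : SpanHom C a b) : Prop :=
  ∀ {x y : C} (m : SpanHom C x y), M m →
    ∀ (u : SpanHom C a x) (v : SpanHom C b y), S.comp f v = S.comp u m →
      ∃ d : SpanHom C b x, S.comp f d = u ∧ S.comp d m = v

/-- Right lifting property against all maps in `E`. -/
def SpanRLP {C : Type u} [Category.{v} C] (S : SpanCat C)
    (E : ∀ {x y : C}, SpanHom C x y → Prop) {x y : C} (m : SpanHom C x y) : Prop :=
  ∀ {a b : C} (f : SpanHom C a b), E f →
    ∀ (u : SpanHom C a x) (v : SpanHom C b y), S.comp f v = S.comp u m →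
      ∃ d : SpanHom C b x, S.comp f d = u ∧ S.comp d m = v

end Paper

namespace Paper

/-- The swap automorphism of the two-element set. -/
def sw : Bool ⟶ Bool := TypeCat.ofHom fun b => !b

/-- The unique map to a point. -/
def bang : Bool ⟶ PUnit.{1} := TypeCat.ofHom fun _ => PUnit.unit

theorem spanRel_equivalence (C : Type u) [Category.{v} C] (a b : C) :
    Equivalence (SpanRel C (a := a) (b := b)) where
  refl _ := ⟨Iso.refl _, Category.id_comp _, Category.id_comp _⟩
  symm := by
    rintro s t ⟨e, hl, hr⟩
    exact ⟨e.symm, by simp [← hl], by simp [← hr]⟩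
  trans := by
    rintro s t w ⟨e, hl, hr⟩ ⟨f, hl', hr'⟩
    exact ⟨e.trans f, by simp [← hl, ← hl'], by simp [← hr, ← hr']⟩

section

variable {C : Type u} [Category.{v} C] {a b : C}

theorem mkSpan_eq_mkSpan_iff {m m' : C} {l : m ⟶ a} {r : m ⟶ b} {l' : m' ⟶ a}
    {r' : m' ⟶ b} :
    mkSpan m l r = mkSpan m' l' r' ↔ ∃ e : m ≅ m', e.hom ≫ l' = l ∧ e.hom ≫ r' = r :=
  ⟨fun h => (spanRel_equivalence C a b).eqvGen_iff.mp (Quot.eq.mp h), fun h => Quot.sound h⟩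

theorem mkSpan_iso_comp {m m' : C} (e : m ≅ m') (l : m' ⟶ a) (r : m' ⟶ b) :
    mkSpan m (e.hom ≫ l) (e.hom ≫ r) = mkSpan m' l r :=
  Quot.sound ⟨e, rfl, rfl⟩

end

namespace SpanCat

variable {C : Type u} [Category.{v} C] (S : SpanCat C) {a b : C}

theorem comp_mkSpan_id_mkSpan_id {m : C} (l : m ⟶ a) (r : m ⟶ b) :
    S.comp (mkSpan m l (𝟙 m)) (mkSpan m (𝟙 m) r) = mkSpan m l r :=
  (S.compat ⟨m, l, 𝟙 m⟩ ⟨m, 𝟙 m, r⟩ m (𝟙 m) (𝟙 m) IsPullback.of_id_fst).trans (by simp)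

theorem comp_mkSpan_id_right {m m' : C} (l : m ⟶ a) (g : m' ⟶ m) :
    S.comp (mkSpan m l (𝟙 m)) (mkSpan m' g (𝟙 m')) = mkSpan m' (g ≫ l) (𝟙 m') :=
  (S.compat ⟨m, l, 𝟙 m⟩ ⟨m', g, 𝟙 m'⟩ m' g (𝟙 m') IsPullback.of_id_snd).trans (by simp)

end SpanCat

def swIso : Bool ≅ Bool where
  hom := sw
  inv := sw
  hom_inv_id := by ext b; cases b <;> rfl
  inv_hom_id := by ext b; cases b <;> rfl

theorem mkSpan_sw_id_ne_id : mkSpan Bool sw (𝟙 Bool) ≠ mkSpan Bool (𝟙 Bool) (𝟙 Bool) := by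
  rw [Ne, mkSpan_eq_mkSpan_iff]
  rintro ⟨e, hl, hr⟩
  have hsw : sw = 𝟙 Bool := hl.symm.trans hr
  exact Bool.noConfusion (congrArg (fun f : Bool ⟶ Bool => f false) hsw)

/-- In `Span(Set)` the two canonical classes do not form an
orthogonal factorization system: `[sw,1] ≠ [1,1]`, the span `(!,!) : * → *` through `2`
factors as `[!,1]` followed by `[1,!]`, and both the identity span on `2` and `[sw,1]`
are comparison morphisms between this factorization and itself — so comparison
morphisms are not unique. -/
theorem statement18 (S : SpanCat (Type 0)) :
    -- [sw, 1] is not the identity span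
    (mkSpan Bool sw (𝟙 Bool) ≠ mkSpan Bool (𝟙 Bool) (𝟙 Bool)) ∧
    -- the span (!,!) : * → * factors as [!,1] ∘ [1,!] through 2
    (S.comp (mkSpan Bool bang (𝟙 Bool)) (mkSpan Bool (𝟙 Bool) bang)
        = mkSpan Bool bang bang) ∧
    -- the identity span is a comparison morphism from this factorization to itself
    (S.comp (mkSpan Bool bang (𝟙 Bool)) (mkSpan Bool (𝟙 Bool) (𝟙 Bool))
          = mkSpan Bool bang (𝟙 Bool) ∧
      S.comp (mkSpan Bool (𝟙 Bool) (𝟙 Bool)) (mkSpan Bool (𝟙 Bool) bang)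
          = mkSpan Bool (𝟙 Bool) bang) ∧
    -- and so is [sw, 1]
    (S.comp (mkSpan Bool bang (𝟙 Bool)) (mkSpan Bool sw (𝟙 Bool))
          = mkSpan Bool bang (𝟙 Bool) ∧
      S.comp (mkSpan Bool sw (𝟙 Bool)) (mkSpan Bool (𝟙 Bool) bang)
          = mkSpan Bool (𝟙 Bool) bang) ∧
    -- hence the comparison morphism is not unique
    ¬ (∃! θ : SpanHom (Type 0) Bool Bool,
        S.comp (mkSpan Bool bang (𝟙 Bool)) θ = mkSpan Bool bang (𝟙 Bool) ∧
        S.comp θ (mkSpan Bool (𝟙 Bool) bang) = mkSpan Bool (𝟙 Bool) bang) := by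
  -- `sw ≫ bang = bang` holds definitionally, the point being terminal.
  have hsw_left : S.comp (mkSpan Bool bang (𝟙 Bool)) (mkSpan Bool sw (𝟙 Bool))
      = mkSpan Bool bang (𝟙 Bool) :=
    S.comp_mkSpan_id_right bang sw
  have hsw_right : S.comp (mkSpan Bool sw (𝟙 Bool)) (mkSpan Bool (𝟙 Bool) bang)
      = mkSpan Bool (𝟙 Bool) bang := by
    rw [S.comp_mkSpan_id_mkSpan_id]
    exact mkSpan_iso_comp swIso (𝟙 Bool) bang
  refine ⟨mkSpan_sw_id_ne_id, S.comp_mkSpan_id_mkSpan_id bang bang,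
    ⟨S.comp_id _, S.id_comp _⟩, ⟨hsw_left, hsw_right⟩, ?_⟩
  rintro ⟨θ, -, hθ⟩
  exact mkSpan_sw_id_ne_id <|
    (hθ _ ⟨hsw_left, hsw_right⟩).trans (hθ _ ⟨S.comp_id _, S.id_comp _⟩).symm

end Paper
end

section
/- Let X be a double category regarded as coherence data (a diagram Δ₂^op → Cat). There is a natural bijection between lax codescent cocones for X with apex a category Y and pairs of functors (F : X0 → Y, ξ : h(X) → Y) agreeing on objects and satisfying the naturality condition: whenever a square in X exists with top edge g, bottom edge h, left vertical edge u and right vertical edge v, then F(v)∘ξ(g) = ξ(h)∘F(u) in Y. Moreover, for a crossed double category X, the pair of functors X0 → Cnr(X), u ↦ [u,1] and h(X) → Cnr(X), g ↦ [1,g] exhibits Cnr(X) as the lax codescent object of X. -/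
open CategoryTheory

universe u

namespace Paper

open CategoryTheory

/-- The category `X₀` of objects and vertical morphisms. -/
def VObj (X : DblCat.{u}) : Type u := X.Obj

instance (X : DblCat.{u}) : Category.{u} (VObj X) where
  Hom a b := X.Ver a b
  id a := X.vId a
  comp f g := X.vComp f g
  id_comp := X.vId_comp
  comp_id := X.vComp_id
  assoc := X.vAssoc

/-- The category `h(X)` of objects and horizontal morphisms. -/
def HObj (X : DblCat.{u}) : Type u := X.Obj

instance (X : DblCat.{u}) : Category.{u} (HObj X) where
  Hom a b := X.Hor a b
  id a := X.hId a
  comp f g := X.hComp f g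
  id_comp := X.hId_comp
  comp_id := X.hComp_id
  assoc := X.hAssoc

/-- A lax codescent cocone for the coherence data associated to the double category
`X`, with apex `Y`, unfolded elementwise: a functor `F : X₀ → Y` together with a
natural transformation `ξ : F d₁ ⇒ F d₀` (i.e. components `ξ g` indexed by horizontal
morphisms, natural in squares) satisfying the multiplicativity and unit cocone
conditions. -/
structure Cocone19 (X : DblCat.{u}) (Y : Type u) [Category.{u} Y] : Type u where
  F : VObj X ⥤ Y
  xi : ∀ {a b : X.Obj}, X.Hor a b → (F.obj a ⟶ F.obj b)
  nat : ∀ {a b c d : X.Obj} {g : X.Hor a b} {u : X.Ver a c} {v : X.Ver b d}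
    {h : X.Hor c d}, X.Sq g u v h → xi g ≫ F.map v = F.map u ≫ xi h
  xi_comp : ∀ {a b c : X.Obj} (g : X.Hor a b) (h : X.Hor b c),
    xi (X.hComp g h) = xi g ≫ xi h
  xi_id : ∀ a : X.Obj, xi (X.hId a) = 𝟙 (F.obj a)

/-- A pair of functors `(F : X₀ → Y, G : h(X) → Y)` agreeing on objects and satisfying
the naturality condition with respect to squares of `X`. -/
structure Pair19 (X : DblCat.{u}) (Y : Type u) [Category.{u} Y] : Type u where
  F : VObj X ⥤ Y
  G : HObj X ⥤ Y
  hobj : ∀ a : X.Obj, F.obj a = G.obj a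
  nat : ∀ {a b c d : X.Obj} {g : X.Hor a b} {u : X.Ver a c} {v : X.Ver b d}
    {h : X.Hor c d}, X.Sq g u v h →
    eqToHom (hobj a) ≫ G.map g ≫ eqToHom (hobj b).symm ≫ F.map v
      = F.map u ≫ eqToHom (hobj c) ≫ G.map h ≫ eqToHom (hobj d).symm

/-!
The multiplicativity and unit laws of a cocone say exactly that `g ↦ ξ g` is a functor
`h(X) → Y`, and the naturality of `ξ` is the square condition on the pair of functors.

For crossed `X`, corners `[u, g]`, `[v, k]` compose through an opcartesian square `κ` with top
`g`, right `v`, left `l` and bottom `bo`, as `[u ≫ l, bo ≫ k]`. Any square with top `g` and right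
`v` factors through `κ`; the factor is a 2-cell of corners, which makes `([·, 1], [1, ·])` a
cocone. A cocone `(F, ξ)` sends `[u ≫ l, bo ≫ k]` to `F u ≫ F l ≫ ξ bo ≫ ξ k`, which equals
`F u ≫ ξ g ≫ F v ≫ ξ k` by naturality of `ξ` at `κ`, so `[u, g] ↦ F u ≫ ξ g` is a functor on
`Cnr X`. It is the only one extending `(F, ξ)` because `[u, g] = [u, 1] ≫ [1, g]`.
-/

namespace DblCat

variable {X : DblCat.{u}}

variable (X) in
def HasOpcartFillers : Prop :=
  ∀ {a b c : X.Obj} (g : X.Hor a b) (u : X.Ver b c),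
    ∃ (bh : X.Obj) (l : X.Ver a bh) (bo : X.Hor bh c) (κ : X.Sq g l u bo), X.Opcart κ

lemma Crossed.hasOpcartFillers (hX : X.Crossed) : X.HasOpcartFillers := hX.1

lemma Crossed.opcart_hIdSq (hX : X.Crossed) {a b : X.Obj} (u : X.Ver a b) :
    X.Opcart (X.hIdSq u) :=
  hX.2.1 u

lemma Opcart.cellRel {a b bh c d e : X.Obj} {g : X.Hor a b} {l : X.Ver a bh} {v : X.Ver b d}
    {bo : X.Hor bh d} {κ : X.Sq g l v bo} (hκ : X.Opcart κ) {u : X.Ver a c} {h : X.Hor c d}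
    (σ : X.Sq g u v h) (k : X.Hor d e) :
    X.CellRel ⟨bh, l, X.hComp bo k⟩ ⟨c, u, X.hComp h k⟩ := by
  obtain ⟨⟨θ, β⟩, ⟨hθ, -⟩, -⟩ := hκ u (X.vId d) h ((X.vComp_id v).symm ▸ σ)
  exact ⟨θ, X.hSq β (X.vIdSq k), hθ⟩

namespace CnrStruct

variable (c : CnrStruct X)

lemma comp_mkM_mkCnr {a b bh c' d e : X.Obj} {g : X.Hor a b} {l : X.Ver a bh} {v : X.Ver b d}
    {bo : X.Hor bh d} {κ : X.Sq g l v bo} (hκ : X.Opcart κ) {u : X.Ver a c'} {h : X.Hor c' d}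
    (σ : X.Sq g u v h) (k : X.Hor d e) :
    c.comp (X.mkM g) (X.mkCnr ⟨d, v, k⟩) = X.mkCnr ⟨c', u, X.hComp h k⟩ := by
  rw [mkM, c.compat _ g v k l bo κ hκ, X.vId_comp]
  exact Quot.sound (hκ.cellRel σ k)

lemma comp_mkE_mkCnr {a b d e : X.Obj} {v : X.Ver b d} (hv : X.Opcart (X.hIdSq v))
    (u : X.Ver a b) (k : X.Hor d e) :
    c.comp (X.mkE u) (X.mkCnr ⟨d, v, k⟩) = X.mkCnr ⟨d, X.vComp u v, k⟩ := by
  rw [mkE, c.compat u (X.hId b) v k v (X.hId d) _ hv, X.hId_comp]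

lemma comp_mkE_mkM {a b d : X.Obj} (hb : X.Opcart (X.hIdSq (X.vId b))) (u : X.Ver a b)
    (g : X.Hor b d) : c.comp (X.mkE u) (X.mkM g) = X.mkCnr ⟨b, u, g⟩ := by
  rw [mkM, c.comp_mkE_mkCnr hb, X.vComp_id]

end CnrStruct

end DblCat

section Functors

variable {X : DblCat.{u}} {Y : Type u} [Category.{u} Y]

@[simp] lemma VObj.map_vId (F : VObj X ⥤ Y) (a : X.Obj) : F.map (X.vId a) = 𝟙 (F.obj a) :=
  F.map_id a

@[simp] lemma VObj.map_vComp (F : VObj X ⥤ Y) {a b c : X.Obj} (u : X.Ver a b) (v : X.Ver b c) :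
    F.map (X.vComp u v) = F.map u ≫ F.map v :=
  F.map_comp u v

@[simp] lemma HObj.map_hId (G : HObj X ⥤ Y) (a : X.Obj) : G.map (X.hId a) = 𝟙 (G.obj a) :=
  G.map_id a

@[simp] lemma HObj.map_hComp (G : HObj X ⥤ Y) {a b c : X.Obj} (g : X.Hor a b) (h : X.Hor b c) :
    G.map (X.hComp g h) = G.map g ≫ G.map h :=
  G.map_comp g h

end Functors

namespace Cocone19

variable {X : DblCat.{u}} {Y : Type u} [Category.{u} Y]

def hFunctor (c : Cocone19 X Y) : HObj X ⥤ Y where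
  obj a := c.F.obj a
  map g := c.xi g
  map_id := c.xi_id
  map_comp := c.xi_comp

def toPair (c : Cocone19 X Y) : Pair19 X Y where
  F := c.F
  G := c.hFunctor
  hobj _ := rfl
  nat σ := by simpa [hFunctor] using c.nat σ

end Cocone19

def Pair19.toCocone {X : DblCat.{u}} {Y : Type u} [Category.{u} Y] (p : Pair19 X Y) :
    Cocone19 X Y where
  F := p.F
  xi {a b} g := eqToHom (p.hobj a) ≫ p.G.map g ≫ eqToHom (p.hobj b).symm
  nat σ := by simpa using p.nat σ
  xi_comp g h := by simp
  xi_id a := by simp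

namespace Cocone19

variable {X : DblCat.{u}} {Y : Type u} [Category.{u} Y]

def equivPair : Cocone19 X Y ≃ Pair19 X Y where
  toFun := toPair
  invFun := Pair19.toCocone
  left_inv c := by
    obtain ⟨F, xi, _, _, _⟩ := c
    simp only [Pair19.toCocone, toPair, hFunctor]
    congr
    funext a b g
    exact (Category.id_comp _).trans (Category.comp_id (xi g))
  right_inv p := by
    obtain ⟨F, G, hobj, _⟩ := p
    simp only [toPair, Pair19.toCocone, Pair19.mk.injEq, true_and]
    exact CategoryTheory.Functor.ext hobj fun _ _ _ => rfl

def cnrLift (G : Cocone19 X Y) {a b : X.Obj} : X.CnrHom a b → (G.F.obj a ⟶ G.F.obj b) :=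
  Quot.lift (fun cn => G.F.map cn.v ≫ G.xi cn.h) fun c₁ c₂ ⟨θ, β, hθ⟩ => by
    have hβ := G.nat β
    simp only [VObj.map_vId, Category.comp_id] at hβ
    simp only [← hθ, VObj.map_vComp, Category.assoc, hβ]

variable (G : Cocone19 X Y)

@[simp] lemma cnrLift_mkCnr {a b : X.Obj} (cn : X.Corner a b) :
    G.cnrLift (X.mkCnr cn) = G.F.map cn.v ≫ G.xi cn.h := rfl

lemma cnrLift_cnrId (a : X.Obj) : G.cnrLift (X.cnrId a) = 𝟙 (G.F.obj a) := by
  simp [DblCat.cnrId, G.xi_id]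

lemma cnrLift_mkE {a b : X.Obj} (u : X.Ver a b) : G.cnrLift (X.mkE u) = G.F.map u := by
  simp [DblCat.mkE, G.xi_id]

lemma cnrLift_mkM {a b : X.Obj} (g : X.Hor a b) : G.cnrLift (X.mkM g) = G.xi g := by
  simp [DblCat.mkM]

lemma cnrLift_comp (c : X.CnrStruct) (hX : X.HasOpcartFillers) {a b d : X.Obj}
    (f : X.CnrHom a b) (f' : X.CnrHom b d) :
    G.cnrLift (c.comp f f') = G.cnrLift f ≫ G.cnrLift f' := by
  induction f using Quot.ind with | mk f => ?_
  induction f' using Quot.ind with | mk f' => ?_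
  obtain ⟨m, u, g⟩ := f
  obtain ⟨m', v, h⟩ := f'
  obtain ⟨bh, w, bo, κ, hκ⟩ := hX g v
  change G.cnrLift (c.comp (X.mkCnr _) (X.mkCnr _)) =
    G.cnrLift (X.mkCnr _) ≫ G.cnrLift (X.mkCnr _)
  rw [c.compat u g v h w bo κ hκ]
  simp only [cnrLift_mkCnr, VObj.map_vComp, G.xi_comp, Category.assoc, reassoc_of% G.nat κ]

lemma eq_cnrLift (c : X.CnrStruct) (hX : ∀ a, X.Opcart (X.hIdSq (X.vId a)))
    {θ : ∀ a b : X.Obj, X.CnrHom a b → (G.F.obj a ⟶ G.F.obj b)}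
    (hcomp : ∀ {a b d : X.Obj} (f : X.CnrHom a b) (f' : X.CnrHom b d),
      θ a d (c.comp f f') = θ a b f ≫ θ b d f')
    (hE : ∀ {a b : X.Obj} (u : X.Ver a b), θ a b (X.mkE u) = G.F.map u)
    (hM : ∀ {a b : X.Obj} (g : X.Hor a b), θ a b (X.mkM g) = G.xi g) :
    θ = fun _ _ => G.cnrLift := by
  funext a b f
  induction f using Quot.ind with | mk f => ?_
  obtain ⟨m, u, g⟩ := f
  change θ a b (X.mkCnr _) = _
  rw [← c.comp_mkE_mkM (hX m), hcomp, hE, hM]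
  rfl

end Cocone19

open DblCat in
/-- (i) Codescent cocones for a double category `X` with apex `Y` are
in natural bijection with pairs of functors `(F : X₀ → Y, ξ : h(X) → Y)` which agree on
objects and satisfy the naturality condition with respect to squares. (ii) For a
crossed double category `X`, the pair `u ↦ [u,1]`, `g ↦ [1,g]` exhibits the category of
corners `Cnr X` as the lax codescent object of `X`: it is a codescent cocone, and it is
universal among codescent cocones. -/
theorem statement19 (X : DblCat.{u}) :
    -- (i) the bijection between cocones and pairs of functors
    (∀ (Y : Type u) [Category.{u} Y],
      ∃ e : Cocone19 X Y ≃ Pair19 X Y,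
        (∀ c : Cocone19 X Y, (e c).F = c.F ∧
          ∃ h : ∀ a : X.Obj, (e c).G.obj a = c.F.obj a,
            ∀ {a b : X.Obj} (g : X.Hor a b),
              (e c).G.map g = eqToHom (h a) ≫ c.xi g ≫ eqToHom (h b).symm)) ∧
    -- (ii) for crossed X, (mkE, mkM) is the codescent object
    (∀ (_hX : X.Crossed) (c : CnrCat X),
      -- it is a cocone: compatibility of [·,1] and [1,·] with the structure of X
      (∀ {a b d : X.Obj} (u : X.Ver a b) (u' : X.Ver b d),
          c.comp (X.mkE u) (X.mkE u') = X.mkE (X.vComp u u')) ∧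
      (∀ {a b c' : X.Obj} (g : X.Hor a b) (h : X.Hor b c'),
          c.comp (X.mkM g) (X.mkM h) = X.mkM (X.hComp g h)) ∧
      (∀ {a b c' d : X.Obj} {g : X.Hor a b} {u : X.Ver a c'} {v : X.Ver b d}
          {h : X.Hor c' d}, X.Sq g u v h →
          c.comp (X.mkM g) (X.mkE v) = c.comp (X.mkE u) (X.mkM h)) ∧
      -- universality: every cocone factors uniquely through Cnr X
      (∀ (Y : Type u) [Category.{u} Y] (G : Cocone19 X Y),
        ∃! θ : ∀ (a b : X.Obj), X.CnrHom a b → (G.F.obj a ⟶ G.F.obj b),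
          (∀ a : X.Obj, θ a a (X.cnrId a) = 𝟙 (G.F.obj a)) ∧
          (∀ {a b d : X.Obj} (f : X.CnrHom a b) (g : X.CnrHom b d),
              θ a d (c.comp f g) = θ a b f ≫ θ b d g) ∧
          (∀ {a b : X.Obj} (u : X.Ver a b), θ a b (X.mkE u) = G.F.map u) ∧
          (∀ {a b : X.Obj} (g : X.Hor a b), θ a b (X.mkM g) = G.xi g))) := by
  refine ⟨fun Y _ => ⟨Cocone19.equivPair, fun c => ⟨rfl, fun _ => rfl, fun g => ?_⟩⟩,
    fun hX c => ?_⟩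
  · exact ((Category.id_comp _).trans (Category.comp_id (c.xi g))).symm
  refine ⟨fun u u' => c.comp_mkE_mkCnr (hX.opcart_hIdSq u') u (X.hId _), fun g h => ?_,
    fun σ => ?_, fun Y _ G => ?_⟩
  · obtain ⟨_, _, _, κ, hκ⟩ := hX.hasOpcartFillers g (X.vId _)
    exact c.comp_mkM_mkCnr hκ (X.vIdSq g) h
  · obtain ⟨_, _, _, κ, hκ⟩ := hX.hasOpcartFillers _ _
    refine (c.comp_mkM_mkCnr hκ σ (X.hId _)).trans ?_
    rw [X.hComp_id, c.comp_mkE_mkM (hX.opcart_hIdSq _)]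
  · refine ⟨fun _ _ => G.cnrLift, ⟨G.cnrLift_cnrId, G.cnrLift_comp c.toCnrStruct
      hX.hasOpcartFillers, G.cnrLift_mkE, G.cnrLift_mkM⟩, fun θ ⟨_, hcomp, hE, hM⟩ =>
      G.eq_cnrLift c.toCnrStruct (fun _ => hX.opcart_hIdSq _) hcomp hE hM⟩

end Paper
end
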